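/- Let (L₁, …, L_h; w₁, …, w_h) be a vertex hierarchy of height h on the weighted graph G = (V, w₁). Then for all s, t ∈ V: dist_G(s,t) = ⨅_{x ∈ Anc(s) ∩ Anc(t)} ( dist_G(s,x) + dist_G(t,x) ), where the infimum in ℕ∞ over the empty set is ⊤. In particular, s and t are connected in G if and only if they have a common ancestor, and in that case the minimum of dist_G(s,x) + dist_G(t,x) over common ancestors x equals dist_G(s,t). -/

import Mathlib

namespace ISLabel

variable {V : Type*}

/-- Two vertices are adjacent in the weighted graph `w` when they are distinct and
joined by an edge of finite weight. -/
def Adj (w : V → V → ℕ∞) (u v : V) : Prop := u ≠ v ∧ w u v < ⊤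

/-- `p` is a walk from `u` to `v` in the weighted graph `w`: a nonempty list of
vertices starting at `u`, ending at `v`, with consecutive vertices adjacent. -/
def IsWalk (w : V → V → ℕ∞) (u v : V) (p : List V) : Prop :=
  p ≠ [] ∧ p.head? = some u ∧ p.getLast? = some v ∧ p.Chain' (Adj w)

/-- The length of a list of vertices: the sum of `f` over consecutive pairs. -/
def pathLen (f : V → V → ℕ∞) (p : List V) : ℕ∞ :=
  ((p.zip p.tail).map fun e => f e.1 e.2).sum

/-- The distance from `u` to `v` in `w`: the infimum of the lengths of all walks
from `u` to `v` (`⊤` if there is no such walk). -/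
noncomputable def wdist (w : V → V → ℕ∞) (u v : V) : ℕ∞ :=
  ⨅ p : {p : List V // IsWalk w u v p}, pathLen w p.1

/-- `I` is an independent set in `w`. -/
def IsIndep (w : V → V → ℕ∞) (I : Set V) : Prop :=
  ∀ u ∈ I, ∀ v ∈ I, ¬ Adj w u v

/-- `w` is a weighted undirected graph: symmetric, and every off-diagonal value is
either `⊤` (no edge) or a weight `≥ 1`. -/
def IsWGraph (w : V → V → ℕ∞) : Prop :=
  (∀ u v, w u v = w v u) ∧ ∀ u v, u ≠ v → 1 ≤ w u v

/-- `w` is supported on `S`: all weights touching a vertex outside `S` are `⊤`. -/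
def SupportedOn (w : V → V → ℕ∞) (S : Set V) : Prop :=
  ∀ u v, u ∉ S ∨ v ∉ S → w u v = ⊤

/-- `VsetOf L i` is the vertex set `V_i = V ∖ (L₁ ∪ … ∪ L_{i-1})`. -/
def VsetOf (L : ℕ → Set V) (i : ℕ) : Set V := {v | ∀ j, 1 ≤ j → j < i → v ∉ L j}

/-- A vertex hierarchy of height `h ≥ 1` on the weighted graph `w 1`:
pairwise disjoint independent levels `L 1, …, L h` covering `V`, and graphs
`w i` supported on `V_i` obtained by the augmenting-edge construction. -/
structure VertexHierarchy (V : Type*) (h : ℕ) where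
  L : ℕ → Set V
  w : ℕ → V → V → ℕ∞
  h_pos : 1 ≤ h
  wgraph : ∀ i, 1 ≤ i → i ≤ h → IsWGraph (w i)
  disj : ∀ i j, 1 ≤ i → i ≤ h → 1 ≤ j → j ≤ h → i ≠ j → ∀ v, v ∈ L i → v ∉ L j
  cover : ∀ v : V, ∃ i, 1 ≤ i ∧ i ≤ h ∧ v ∈ L i
  supported : ∀ i, 1 ≤ i → i ≤ h → SupportedOn (w i) (VsetOf L i)
  aug : ∀ i, 2 ≤ i → i ≤ h → ∀ u v : V, u ≠ v → u ∈ VsetOf L i → v ∈ VsetOf L i →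
    w i u v = min (w (i - 1) u v) (⨅ x ∈ L (i - 1), w (i - 1) u x + w (i - 1) x v)
  indep : ∀ i, 1 ≤ i → i ≤ h → IsIndep (w i) (L i)

/-- The level `ℓ(v)`: the unique `i` with `1 ≤ i ≤ h` and `v ∈ L i`. -/
noncomputable def level {h : ℕ} (H : VertexHierarchy V h) (v : V) : ℕ :=
  sInf {i | 1 ≤ i ∧ i ≤ h ∧ v ∈ H.L i}

/-- One step of an ascending sequence: go to a strictly higher-level vertex that is
adjacent in the graph at the current vertex's level. -/
def AscStep {h : ℕ} (H : VertexHierarchy V h) (a b : V) : Prop :=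
  level H a < level H b ∧ Adj (H.w (level H a)) a b

/-- `p` is an ascending sequence from `v` to `u`. -/
def IsAscending {h : ℕ} (H : VertexHierarchy V h) (v u : V) (p : List V) : Prop :=
  p ≠ [] ∧ p.head? = some v ∧ p.getLast? = some u ∧ p.Chain' (AscStep H)

/-- The set of ancestors of `v`. -/
def Anc {h : ℕ} (H : VertexHierarchy V h) (v : V) : Set V :=
  {u | ∃ p, IsAscending H v u p}

/-- `d(v,u)`: the infimum of the lengths of ascending sequences from `v` to `u`,
where each step `a → b` costs `w (ℓ(a)) a b`; `⊤` if `u` is not an ancestor of `v`. -/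
noncomputable def ancDist {h : ℕ} (H : VertexHierarchy V h) (v u : V) : ℕ∞ :=
  ⨅ p : {p : List V // IsAscending H v u p},
    pathLen (fun a b => H.w (level H a) a b) p.1

/-!
A walk of `G_i` lifts to `G_{i+1}` without getting longer: a vertex `b ∈ L_i` inside the walk,
between `a` and `c`, is bypassed by the augmenting edge `a c` of weight at most
`w_i a b + w_i b c`, and an endpoint in `L_i` is replaced by its neighbour on the walk, which is
one of its ancestors. Since `L_h` is independent, walks of `G_h` are trivial, so lifting a walk
from `s` to `t` all the way up ends at a common ancestor `x`; as `dist_G ≤ w_i` on every level,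
`dist_G(s,x) + dist_G(t,x)` is at most the length of the walk. The other inequality is the
triangle inequality.
-/

open Relation

section Walks

variable {w : V → V → ℕ∞} {u v : V}

@[simp]
lemma pathLen_singleton (f : V → V → ℕ∞) (a : V) : pathLen f [a] = 0 := rfl

@[simp]
lemma pathLen_cons_cons (f : V → V → ℕ∞) (a b : V) (l : List V) :
    pathLen f (a :: b :: l) = f a b + pathLen f (b :: l) := by
  simp [pathLen]

lemma isWalk_singleton_iff {a : V} : IsWalk w u v [a] ↔ u = a ∧ v = a := by
  simp only [IsWalk, ne_eq, reduceCtorEq, not_false_eq_true, List.head?_cons,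
    List.getLast?_singleton, Option.some.injEq, true_and]
  exact ⟨fun ⟨hu, hv, _⟩ => ⟨hu.symm, hv.symm⟩,
    fun ⟨hu, hv⟩ => ⟨hu.symm, hv.symm, List.isChain_singleton a⟩⟩

lemma isWalk_cons_cons_iff {a b : V} {l : List V} :
    IsWalk w u v (a :: b :: l) ↔ u = a ∧ Adj w a b ∧ IsWalk w b v (b :: l) := by
  simp only [IsWalk, ne_eq, reduceCtorEq, not_false_eq_true, List.head?_cons, Option.some.injEq,
    List.getLast?_cons_cons, true_and]
  exact ⟨fun ⟨hu, hv, hc⟩ => ⟨hu.symm, (List.isChain_cons_cons.1 hc).1, hv,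
      (List.isChain_cons_cons.1 hc).2⟩,
    fun ⟨hu, hab, hv, hc⟩ => ⟨hu.symm, hv, List.isChain_cons_cons.2 ⟨hab, hc⟩⟩⟩

lemma IsWalk.exists_eq_cons {p : List V} (hp : IsWalk w u v p) : ∃ l, p = u :: l := by
  obtain ⟨hne, hhead, -⟩ := hp
  obtain ⟨a, l, rfl⟩ := List.exists_cons_of_ne_nil hne
  exact ⟨l, by simpa using hhead⟩

lemma Adj.symm (hw : ∀ a b, w a b = w b a) (huv : Adj w u v) : Adj w v u :=
  ⟨huv.1.symm, hw u v ▸ huv.2⟩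

lemma wdist_le_pathLen {p : List V} (hp : IsWalk w u v p) : wdist w u v ≤ pathLen w p :=
  iInf_le (fun q : {q // IsWalk w u v q} => pathLen w q.1) ⟨p, hp⟩

@[simp]
lemma wdist_self : wdist w v v = 0 :=
  nonpos_iff_eq_zero.1 <| by
    simpa using wdist_le_pathLen (w := w) (isWalk_singleton_iff.2 ⟨rfl, rfl⟩)

lemma le_wdist_of_forall {c : ℕ∞}
    (hc : ∀ l, IsWalk w u v (u :: l) → c ≤ pathLen w (u :: l)) : c ≤ wdist w u v :=
  le_iInf fun p => by
    obtain ⟨l, hl⟩ := p.2.exists_eq_cons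
    have hp := p.2
    rw [hl] at hp ⊢
    exact hc l hp

lemma wdist_eq_top_of_forall_not_adj (hw : ∀ a b, ¬ Adj w a b) (huv : u ≠ v) :
    wdist w u v = ⊤ :=
  top_le_iff.1 <| le_wdist_of_forall fun
    | [], hp => absurd (isWalk_singleton_iff.1 hp) fun ⟨hu, hv⟩ => huv (hu.trans hv.symm)
    | _ :: _, hp => absurd (isWalk_cons_cons_iff.1 hp).2.1 (hw _ _)

lemma wdist_le_add_wdist {b : V} (hub : Adj w u b) : wdist w u v ≤ w u b + wdist w b v := by
  rw [← tsub_le_iff_left]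
  exact le_wdist_of_forall fun l hp =>
    tsub_le_iff_left.2 (by simpa using wdist_le_pathLen (isWalk_cons_cons_iff.2 ⟨rfl, hub, hp⟩))

lemma wdist_le (u v : V) : wdist w u v ≤ w u v := by
  rcases eq_or_ne u v with rfl | huv
  · simp
  rcases (le_top : w u v ≤ ⊤).lt_or_eq with hlt | htop
  · simpa using wdist_le_add_wdist (v := v) ⟨huv, hlt⟩
  · simp [htop]

lemma wdist_le_pathLen_add {x : V} :
    ∀ {u : V} (l : List V), IsWalk w u x (u :: l) →
      wdist w u v ≤ pathLen w (u :: l) + wdist w x v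
  | u, [], hp => by simp [(isWalk_singleton_iff.1 hp).2]
  | u, b :: l, hp => by
    obtain ⟨-, hub, hb⟩ := isWalk_cons_cons_iff.1 hp
    calc wdist w u v ≤ w u b + wdist w b v := wdist_le_add_wdist hub
      _ ≤ w u b + (pathLen w (b :: l) + wdist w x v) := by gcongr; exact wdist_le_pathLen_add l hb
      _ = pathLen w (u :: b :: l) + wdist w x v := by simp [add_assoc]

lemma wdist_triangle (u x v : V) : wdist w u v ≤ wdist w u x + wdist w x v := by
  rw [← tsub_le_iff_right]
  exact le_wdist_of_forall fun l hp => tsub_le_iff_right.2 (wdist_le_pathLen_add l hp)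

lemma wdist_swap_le_pathLen (hw : ∀ a b, w a b = w b a) :
    ∀ {u : V} (l : List V), IsWalk w u v (u :: l) → wdist w v u ≤ pathLen w (u :: l)
  | u, [], hp => by simp [(isWalk_singleton_iff.1 hp).2]
  | u, b :: l, hp => by
    obtain ⟨-, hub, hb⟩ := isWalk_cons_cons_iff.1 hp
    calc wdist w v u ≤ wdist w v b + wdist w b u := wdist_triangle v b u
      _ ≤ pathLen w (b :: l) + w u b := by
          gcongr
          · exact wdist_swap_le_pathLen hw l hb
          · exact (wdist_le b u).trans_eq (hw b u)
      _ = pathLen w (u :: b :: l) := by simp [add_comm]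

lemma wdist_comm (hw : ∀ a b, w a b = w b a) (u v : V) : wdist w u v = wdist w v u :=
  le_antisymm (le_wdist_of_forall (wdist_swap_le_pathLen hw))
    (le_wdist_of_forall (wdist_swap_le_pathLen hw))

end Walks

section Hierarchy

variable {h : ℕ} (H : VertexHierarchy V h)

lemma level_spec (v : V) : 1 ≤ level H v ∧ level H v ≤ h ∧ v ∈ H.L (level H v) :=
  Nat.sInf_mem (s := {i | 1 ≤ i ∧ i ≤ h ∧ v ∈ H.L i}) (H.cover v)

lemma level_eq_of_mem {i : ℕ} {v : V} (h1 : 1 ≤ i) (h2 : i ≤ h) (hv : v ∈ H.L i) :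
    level H v = i := by
  obtain ⟨l1, l2, l3⟩ := level_spec H v
  by_contra hne
  exact H.disj _ _ l1 l2 h1 h2 hne v l3 hv

lemma mem_VsetOf_iff {i : ℕ} {v : V} : v ∈ VsetOf H.L i ↔ i ≤ level H v := by
  obtain ⟨l1, l2, l3⟩ := level_spec H v
  refine ⟨fun hv => ?_, fun hle j hj1 hji hj => ?_⟩
  · by_contra! hlt
    exact hv _ l1 hlt l3
  · have := level_eq_of_mem H hj1 (by omega) hj
    omega

lemma le_level_of_adj {i : ℕ} (h1 : 1 ≤ i) (h2 : i ≤ h) {u v : V} (huv : Adj (H.w i) u v) :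
    i ≤ level H u ∧ i ≤ level H v := by
  simp only [← mem_VsetOf_iff H]
  by_contra hout
  exact huv.2.ne (H.supported i h1 h2 u v (not_and_or.1 hout))

lemma lt_level_of_adj_of_level_eq {i : ℕ} (h1 : 1 ≤ i) (h2 : i ≤ h) {u v : V}
    (huv : Adj (H.w i) u v) (hu : level H u = i) : i < level H v := by
  refine (le_level_of_adj H h1 h2 huv).2.lt_of_ne fun hv => ?_
  exact H.indep i h1 h2 u (hu ▸ (level_spec H u).2.2) v (hv ▸ (level_spec H v).2.2) huv

lemma not_adj_top (u v : V) : ¬ Adj (H.w h) u v := fun huv =>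
  have hu := le_level_of_adj H H.h_pos le_rfl huv
  (lt_level_of_adj_of_level_eq H H.h_pos le_rfl huv (le_antisymm (level_spec H u).2.1 hu.1)).not_ge
    (level_spec H v).2.1

lemma w_succ_eq {i : ℕ} (h1 : 1 ≤ i) (h2 : i < h) {u v : V} (huv : u ≠ v)
    (hu : i < level H u) (hv : i < level H v) :
    H.w (i + 1) u v = min (H.w i u v) (⨅ x ∈ H.L i, H.w i u x + H.w i x v) :=
  H.aug (i + 1) (by omega) h2 u v huv ((mem_VsetOf_iff H).2 hu) ((mem_VsetOf_iff H).2 hv)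

lemma wdist_one_le_w {i : ℕ} (h1 : 1 ≤ i) (h2 : i ≤ h) (u v : V) :
    wdist (H.w 1) u v ≤ H.w i u v := by
  induction i, h1 using Nat.le_induction generalizing u v with
  | base => exact wdist_le u v
  | succ i h1 ih =>
    rcases eq_or_ne u v with rfl | huv
    · simp
    by_cases hlev : i < level H u ∧ i < level H v
    · rw [w_succ_eq H h1 h2 huv hlev.1 hlev.2]
      refine le_min (ih (by omega) u v) (le_iInf₂ fun x _ => ?_)
      exact (wdist_triangle u x v).trans (add_le_add (ih (by omega) u x) (ih (by omega) x v))
    · rw [H.supported (i + 1) (by omega) h2 u v (by simp only [mem_VsetOf_iff]; omega)]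
      exact le_top

lemma wdist_succ_le_w {i : ℕ} (h1 : 1 ≤ i) (h2 : i < h) {u v : V}
    (hu : i < level H u) (hv : i < level H v) : wdist (H.w (i + 1)) u v ≤ H.w i u v := by
  rcases eq_or_ne u v with rfl | huv
  · simp
  exact (wdist_le u v).trans ((w_succ_eq H h1 h2 huv hu hv).trans_le (min_le_left _ _))

lemma wdist_succ_le_add {i : ℕ} (h1 : 1 ≤ i) (h2 : i < h) {u v x : V}
    (hu : i < level H u) (hv : i < level H v) (hx : x ∈ H.L i) :
    wdist (H.w (i + 1)) u v ≤ H.w i u x + H.w i x v := by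
  rcases eq_or_ne u v with rfl | huv
  · simp
  exact (wdist_le u v).trans
    ((w_succ_eq H h1 h2 huv hu hv).trans_le ((min_le_right _ _).trans (iInf₂_le x hx)))

lemma mem_Anc_iff {u v : V} : u ∈ Anc H v ↔ ReflTransGen (AscStep H) v u := by
  constructor
  · rintro ⟨p, hne, hhead, hlast, hchain⟩
    obtain ⟨a, l, rfl⟩ := List.exists_cons_of_ne_nil hne
    obtain rfl : a = v := by simpa using hhead
    exact List.relationReflTransGen_of_exists_isChain_cons l hchain
      (by simpa [List.getLast?_eq_some_getLast] using hlast)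
  · intro huv
    obtain ⟨l, hchain, hlast⟩ := List.exists_isChain_cons_of_relationReflTransGen huv
    exact ⟨v :: l, List.cons_ne_nil _ _, rfl, by simp [List.getLast?_eq_some_getLast, hlast],
      hchain⟩

lemma mem_Anc_self (v : V) : v ∈ Anc H v := (mem_Anc_iff H).2 .refl

lemma Anc_subset_of_mem {u v : V} (hu : u ∈ Anc H v) : Anc H u ⊆ Anc H v := fun _ hx =>
  (mem_Anc_iff H).2 (((mem_Anc_iff H).1 hu).trans ((mem_Anc_iff H).1 hx))

lemma wdist_lt_top_of_mem_Anc {u v : V} (hu : u ∈ Anc H v) : wdist (H.w 1) v u < ⊤ := by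
  rw [mem_Anc_iff] at hu
  induction hu using ReflTransGen.head_induction_on with
  | refl => simp
  | @head a b hab _ ih =>
    obtain ⟨l1, l2, -⟩ := level_spec H a
    calc wdist (H.w 1) a u ≤ wdist (H.w 1) a b + wdist (H.w 1) b u := wdist_triangle a b u
      _ ≤ H.w (level H a) a b + wdist (H.w 1) b u := by gcongr; exact wdist_one_le_w H l1 l2 a b
      _ < ⊤ := ENat.add_lt_top.2 ⟨hab.2.2, ih⟩

lemma exists_lift_walk_of_lt_level {i : ℕ} (h1 : 1 ≤ i) (h2 : i < h) {t : V} :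
    ∀ {s : V} (l : List V), IsWalk (H.w i) s t (s :: l) → i < level H s →
      ∃ t' ∈ Anc H t,
        wdist (H.w (i + 1)) s t' + wdist (H.w 1) t t' ≤ pathLen (H.w i) (s :: l)
  | s, [], hp, _ => by
    obtain rfl := (isWalk_singleton_iff.1 hp).2
    exact ⟨t, mem_Anc_self H t, by simp⟩
  | s, b :: l, hp, hs => by
    obtain ⟨-, hsb, hb⟩ := isWalk_cons_cons_iff.1 hp
    by_cases hb' : i < level H b
    · obtain ⟨t', ht', hle⟩ := exists_lift_walk_of_lt_level h1 h2 l hb hb'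
      refine ⟨t', ht', ?_⟩
      calc wdist (H.w (i + 1)) s t' + wdist (H.w 1) t t'
          ≤ wdist (H.w (i + 1)) s b + (wdist (H.w (i + 1)) b t' + wdist (H.w 1) t t') := by
            rw [← add_assoc]; gcongr; exact wdist_triangle s b t'
        _ ≤ H.w i s b + pathLen (H.w i) (b :: l) := by
            gcongr; exact wdist_succ_le_w H h1 h2 hs hb'
        _ = pathLen (H.w i) (s :: b :: l) := by simp
    have hbi : level H b = i := by have := (le_level_of_adj H h1 h2.le hsb).2; omega
    have hbL : b ∈ H.L i := hbi ▸ (level_spec H b).2.2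
    match l, hb with
    | [], hb =>
      obtain rfl := (isWalk_singleton_iff.1 hb).2
      have hsymm := (H.wgraph i h1 h2.le).1
      refine ⟨s, (mem_Anc_iff H).2 (.single ⟨hbi ▸ hs, hbi ▸ hsb.symm hsymm⟩), ?_⟩
      simpa [hsymm s t] using wdist_one_le_w H h1 h2.le t s
    | c :: l, hb =>
      obtain ⟨-, hbc, hc⟩ := isWalk_cons_cons_iff.1 hb
      have hc' : i < level H c := lt_level_of_adj_of_level_eq H h1 h2.le hbc hbi
      obtain ⟨t', ht', hle⟩ := exists_lift_walk_of_lt_level h1 h2 l hc hc'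
      refine ⟨t', ht', ?_⟩
      calc wdist (H.w (i + 1)) s t' + wdist (H.w 1) t t'
          ≤ wdist (H.w (i + 1)) s c + (wdist (H.w (i + 1)) c t' + wdist (H.w 1) t t') := by
            rw [← add_assoc]; gcongr; exact wdist_triangle s c t'
        _ ≤ (H.w i s b + H.w i b c) + pathLen (H.w i) (c :: l) := by
            gcongr; exact wdist_succ_le_add H h1 h2 hs hc' hbL
        _ = pathLen (H.w i) (s :: b :: c :: l) := by simp [add_assoc]

lemma exists_lift_walk {i : ℕ} (h1 : 1 ≤ i) (h2 : i < h) {s t : V} {p : List V}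
    (hp : IsWalk (H.w i) s t p) :
    ∃ s' ∈ Anc H s, ∃ t' ∈ Anc H t,
      wdist (H.w 1) s s' + wdist (H.w (i + 1)) s' t' + wdist (H.w 1) t t' ≤
        pathLen (H.w i) p := by
  obtain ⟨l, rfl⟩ := hp.exists_eq_cons
  cases l with
  | nil =>
    obtain rfl := (isWalk_singleton_iff.1 hp).2
    exact ⟨t, mem_Anc_self H t, t, mem_Anc_self H t, by simp⟩
  | cons b l =>
    by_cases hs : i < level H s
    · obtain ⟨t', ht', hle⟩ := exists_lift_walk_of_lt_level H h1 h2 _ hp hs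
      exact ⟨s, mem_Anc_self H s, t', ht', by simpa using hle⟩
    obtain ⟨-, hsb, hb⟩ := isWalk_cons_cons_iff.1 hp
    have hsi : level H s = i := by have := (le_level_of_adj H h1 h2.le hsb).1; omega
    have hb' : i < level H b := lt_level_of_adj_of_level_eq H h1 h2.le hsb hsi
    obtain ⟨t', ht', hle⟩ := exists_lift_walk_of_lt_level H h1 h2 l hb hb'
    refine ⟨b, (mem_Anc_iff H).2 (.single ⟨hsi ▸ hb', hsi ▸ hsb⟩), t', ht', ?_⟩
    calc wdist (H.w 1) s b + wdist (H.w (i + 1)) b t' + wdist (H.w 1) t t'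
        ≤ H.w i s b + pathLen (H.w i) (b :: l) := by
          rw [add_assoc]; gcongr; exact wdist_one_le_w H h1 h2.le s b
      _ = pathLen (H.w i) (s :: b :: l) := by simp

noncomputable def commonAncDist (s t : V) : ℕ∞ :=
  ⨅ x ∈ Anc H s ∩ Anc H t, wdist (H.w 1) s x + wdist (H.w 1) t x

lemma commonAncDist_self (s : V) : commonAncDist H s s = 0 :=
  nonpos_iff_eq_zero.1 <| (iInf₂_le s ⟨mem_Anc_self H s, mem_Anc_self H s⟩).trans (by simp)

lemma commonAncDist_lt_top_iff {s t : V} :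
    commonAncDist H s t < ⊤ ↔ (Anc H s ∩ Anc H t).Nonempty := by
  refine ⟨fun hlt => ?_, fun ⟨x, hx⟩ => ?_⟩
  · by_contra hempty
    simp [commonAncDist, Set.not_nonempty_iff_eq_empty.1 hempty] at hlt
  · exact (iInf₂_le x hx).trans_lt
      (ENat.add_lt_top.2 ⟨wdist_lt_top_of_mem_Anc H hx.1, wdist_lt_top_of_mem_Anc H hx.2⟩)

lemma commonAncDist_le_add {s t s' t' : V} (hs : s' ∈ Anc H s) (ht : t' ∈ Anc H t) :
    commonAncDist H s t ≤ wdist (H.w 1) s s' + commonAncDist H s' t' + wdist (H.w 1) t t' := by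
  simp only [commonAncDist, ENat.add_iInf₂, ENat.iInf₂_add]
  refine le_iInf₂ fun x hx => ?_
  calc ⨅ y ∈ Anc H s ∩ Anc H t, wdist (H.w 1) s y + wdist (H.w 1) t y
      ≤ wdist (H.w 1) s x + wdist (H.w 1) t x :=
        iInf₂_le x ⟨Anc_subset_of_mem H hs hx.1, Anc_subset_of_mem H ht hx.2⟩
    _ ≤ (wdist (H.w 1) s s' + wdist (H.w 1) s' x) + (wdist (H.w 1) t t' + wdist (H.w 1) t' x) :=
        add_le_add (wdist_triangle s s' x) (wdist_triangle t t' x)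
    _ = _ := by ring

lemma commonAncDist_le_wdist {i : ℕ} (h1 : 1 ≤ i) (h2 : i ≤ h) (s t : V) :
    commonAncDist H s t ≤ wdist (H.w i) s t := by
  induction h2 using Nat.decreasingInduction generalizing s t with
  | self =>
    rcases eq_or_ne s t with rfl | hst
    · simp [commonAncDist_self]
    · rw [wdist_eq_top_of_forall_not_adj (not_adj_top H) hst]
      exact le_top
  | of_succ k hk ih =>
    refine le_wdist_of_forall fun l hp => ?_
    obtain ⟨s', hs', t', ht', hle⟩ := exists_lift_walk H h1 hk hp
    calc commonAncDist H s t
        ≤ wdist (H.w 1) s s' + commonAncDist H s' t' + wdist (H.w 1) t t' :=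
          commonAncDist_le_add H hs' ht'
      _ ≤ wdist (H.w 1) s s' + wdist (H.w (k + 1)) s' t' + wdist (H.w 1) t t' := by
          gcongr; exact ih (by omega) s' t'
      _ ≤ pathLen (H.w k) (s :: l) := hle

end Hierarchy

theorem dist_eq_iInf_common_ancestor_general {h : ℕ}
    (H : VertexHierarchy V h) (s t : V) :
    (wdist (H.w 1) s t =
      ⨅ x ∈ Anc H s ∩ Anc H t, (wdist (H.w 1) s x + wdist (H.w 1) t x)) ∧
    (wdist (H.w 1) s t < ⊤ ↔ (Anc H s ∩ Anc H t).Nonempty) := by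
  have hsymm := (H.wgraph 1 le_rfl H.h_pos).1
  have heq : wdist (H.w 1) s t = commonAncDist H s t := by
    refine le_antisymm (le_iInf₂ fun x _ => ?_) (commonAncDist_le_wdist H le_rfl H.h_pos s t)
    exact (wdist_triangle s x t).trans_eq (by rw [wdist_comm hsymm x t])
  exact ⟨heq, heq ▸ commonAncDist_lt_top_iff H⟩

/-- distance is realized through common ancestors (with true
distances); in particular two vertices are connected iff they have a common
ancestor. -/
theorem dist_eq_iInf_common_ancestor [Fintype V] {h : ℕ}
    (H : VertexHierarchy V h) (s t : V) :
    (wdist (H.w 1) s t =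
      ⨅ x ∈ Anc H s ∩ Anc H t, (wdist (H.w 1) s x + wdist (H.w 1) t x)) ∧
    (wdist (H.w 1) s t < ⊤ ↔ (Anc H s ∩ Anc H t).Nonempty) :=
  dist_eq_iInf_common_ancestor_general H s t

end ISLabel
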